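/- arXiv:0809.2116 — 4 statements merged into one kernel-verified Lean document; each statement's English description precedes it below -/
import Mathlib

section
/- Suppose g(z,w) = Σ_{α+β≥k} c_{α,β} z^α w^β and h(z,w) = Σ_{α+β≥k} d_{α,β} z^α w^β are formal power series with no terms of total degree < k, and they satisfy g_z + h_w − g·h − z·g·h_z − w·h·g_w − z·w·g_w·h_z + z·w·g_z·h_w = 0. Then for all α ≥ 1, β ≥ 1 with k ≤ α+β−1 ≤ 2k, one has d_{α−1,β} = −(α/β)·c_{α,β−1}. -/
/-!
Comparing coefficients of `z^(α-1) w^(β-1)` in the equation: if `g` and `h` have order at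
least `k`, then so has `g h`, while `g_z`, `g_w`, `h_z`, `h_w` have order at least `k - 1`;
hence every nonlinear term of the equation has order at least `2k`. In total degree at most
`2k - 1` only `g_z + h_w` survives, and its coefficient there is
`α c_{α,β-1} + β d_{α-1,β}`.
-/

open MvPowerSeries

/-- The formal power series `Σ c α β z^α w^β` in two variables. -/
noncomputable def mkPS (c : ℕ → ℕ → ℂ) : MvPowerSeries (Fin 2) ℂ :=
  fun m => c (m 0) (m 1)

/-- Formal partial derivative of a two-variable power series in the first variable. -/
noncomputable def Dz (S : MvPowerSeries (Fin 2) ℂ) : MvPowerSeries (Fin 2) ℂ :=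
  fun m => ((m 0 : ℂ) + 1) * MvPowerSeries.coeff (m + Finsupp.single 0 1) S

/-- Formal partial derivative of a two-variable power series in the second variable. -/
noncomputable def Dw (S : MvPowerSeries (Fin 2) ℂ) : MvPowerSeries (Fin 2) ℂ :=
  fun m => ((m 1 : ℂ) + 1) * MvPowerSeries.coeff (m + Finsupp.single 1 1) S

section Order

variable {σ R : Type*} [CommSemiring R]

lemma le_order_mul_of_le {f g : MvPowerSeries σ R} {a b : ℕ∞} (ha : a ≤ f.order)
    (hb : b ≤ g.order) : a + b ≤ (f * g).order :=
  (add_le_add ha hb).trans le_order_mul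

lemma one_le_order_X [Nontrivial R] (s : σ) : 1 ≤ (X s : MvPowerSeries σ R).order :=
  one_le_order_iff_constCoeff_eq_zero.mpr (constantCoeff_X s)

lemma le_order_of_coeff_eq_mul_coeff_add_single {S T : MvPowerSeries σ R} (i : σ)
    (a : (σ →₀ ℕ) → R) (hT : ∀ d, coeff d T = a d * coeff (d + Finsupp.single i 1) S)
    {n : ℕ} (hS : ((n + 1 : ℕ) : ℕ∞) ≤ S.order) : (n : ℕ∞) ≤ T.order := by
  refine nat_le_order fun d hd => ?_
  rw [hT, coeff_of_lt_order, mul_zero]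
  refine lt_of_lt_of_le ?_ hS
  rw [map_add, Finsupp.degree_single]
  exact_mod_cast Nat.add_lt_add_right hd 1

end Order

lemma le_order_Dz {S : MvPowerSeries (Fin 2) ℂ} {n : ℕ} (hS : ((n + 1 : ℕ) : ℕ∞) ≤ S.order) :
    (n : ℕ∞) ≤ (Dz S).order :=
  le_order_of_coeff_eq_mul_coeff_add_single 0 _ (fun _ => rfl) hS

lemma le_order_Dw {S : MvPowerSeries (Fin 2) ℂ} {n : ℕ} (hS : ((n + 1 : ℕ) : ℕ∞) ≤ S.order) :
    (n : ℕ∞) ≤ (Dw S).order :=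
  le_order_of_coeff_eq_mul_coeff_add_single 1 _ (fun _ => rfl) hS

lemma degree_fin_two (d : Fin 2 →₀ ℕ) : d.degree = d 0 + d 1 := by
  rw [Finsupp.degree_eq_sum, Fin.sum_univ_two]

lemma le_order_mkPS {c : ℕ → ℕ → ℂ} {k : ℕ} (hc : ∀ α β : ℕ, α + β < k → c α β = 0) :
    (k : ℕ∞) ≤ (mkPS c).order :=
  nat_le_order fun d hd => hc _ _ (by rwa [degree_fin_two] at hd)

lemma coeff_Dz_mkPS (c : ℕ → ℕ → ℂ) (a b : ℕ) :
    coeff (Finsupp.single 0 a + Finsupp.single 1 b) (Dz (mkPS c)) = (a + 1) * c (a + 1) b := by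
  change (_ + 1) * c _ _ = _
  simp

lemma coeff_Dw_mkPS (c : ℕ → ℕ → ℂ) (a b : ℕ) :
    coeff (Finsupp.single 0 a + Finsupp.single 1 b) (Dw (mkPS c)) = (b + 1) * c a (b + 1) := by
  change (_ + 1) * c _ _ = _
  simp

noncomputable def pdeOperator (g h : MvPowerSeries (Fin 2) ℂ) : MvPowerSeries (Fin 2) ℂ :=
  Dz g + Dw h - g * h - X 0 * g * Dz h - X 1 * h * Dw g - X 0 * X 1 * Dw g * Dz h
    + X 0 * X 1 * Dz g * Dw h

lemma coeff_pdeOperator_of_degree_lt {g h : MvPowerSeries (Fin 2) ℂ} {j : ℕ}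
    (hg : ((j + 1 : ℕ) : ℕ∞) ≤ g.order) (hh : ((j + 1 : ℕ) : ℕ∞) ≤ h.order)
    {m : Fin 2 →₀ ℕ} (hm : m.degree < 2 * j + 2) :
    coeff m (pdeOperator g h) = coeff m (Dz g) + coeff m (Dw h) := by
  have hX0 := one_le_order_X (R := ℂ) (0 : Fin 2)
  have hX1 := one_le_order_X (R := ℂ) (1 : Fin 2)
  have vanish : ∀ {F : MvPowerSeries (Fin 2) ℂ} {a : ℕ∞},
      a ≤ F.order → ((2 * j + 2 : ℕ) : ℕ∞) ≤ a → coeff m F = 0 := fun hF ha =>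
    coeff_of_lt_order ((Nat.cast_lt.mpr hm).trans_le (ha.trans hF))
  have h_gh := vanish (le_order_mul_of_le hg hh) (by norm_cast; omega)
  have h_zghz := vanish (le_order_mul_of_le (le_order_mul_of_le hX0 hg) (le_order_Dz hh))
    (by norm_cast; omega)
  have h_whgw := vanish (le_order_mul_of_le (le_order_mul_of_le hX1 hh) (le_order_Dw hg))
    (by norm_cast; omega)
  have h_zwgwhz := vanish
    (le_order_mul_of_le (le_order_mul_of_le (le_order_mul_of_le hX0 hX1) (le_order_Dw hg))
      (le_order_Dz hh)) (by norm_cast; omega)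
  have h_zwgzhw := vanish
    (le_order_mul_of_le (le_order_mul_of_le (le_order_mul_of_le hX0 hX1) (le_order_Dz hg))
      (le_order_Dw hh)) (by norm_cast; omega)
  simp only [pdeOperator, map_add, map_sub, h_gh, h_zghz, h_whgw, h_zwgwhz, h_zwgzhw]
  ring

/-- If the formal power series `g = Σ_{α+β≥k} c_{α,β} z^α w^β` and
`h = Σ_{α+β≥k} d_{α,β} z^α w^β` satisfy the PDE
`g_z + h_w − gh − z g h_z − w h g_w − zw g_w h_z + zw g_z h_w = 0`, then
`d_{α−1,β} = −(α/β) c_{α,β−1}` for all `α, β ≥ 1` with `k ≤ α+β−1 ≤ 2k`. -/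
theorem pde_coefficient_relations
    (k : ℕ) (c d : ℕ → ℕ → ℂ)
    (hc : ∀ α β : ℕ, α + β < k → c α β = 0)
    (hd : ∀ α β : ℕ, α + β < k → d α β = 0)
    (hpde :
      Dz (mkPS c) + Dw (mkPS d) - mkPS c * mkPS d
        - X 0 * mkPS c * Dz (mkPS d) - X 1 * mkPS d * Dw (mkPS c)
        - X 0 * X 1 * Dw (mkPS c) * Dz (mkPS d)
        + X 0 * X 1 * Dz (mkPS c) * Dw (mkPS d) = 0) :
    ∀ α β : ℕ, 1 ≤ α → 1 ≤ β → k ≤ α + β - 1 → α + β - 1 ≤ 2 * k →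
      d (α - 1) β = -((α : ℂ) / (β : ℂ)) * c α (β - 1) := by
  rintro α β hα hβ - hdeg
  obtain ⟨a, rfl⟩ : ∃ a, α = a + 1 := ⟨α - 1, by omega⟩
  obtain ⟨b, rfl⟩ : ∃ b, β = b + 1 := ⟨β - 1, by omega⟩
  obtain ⟨j, rfl⟩ : ∃ j, k = j + 1 := ⟨k - 1, by omega⟩
  have linear : (a + 1) * c (a + 1) b + (b + 1) * d a (b + 1) = 0 := by
    have hm : (Finsupp.single (0 : Fin 2) a + Finsupp.single 1 b).degree < 2 * j + 2 := by
      rw [map_add, Finsupp.degree_single, Finsupp.degree_single]; omega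
    rw [← coeff_Dz_mkPS, ← coeff_Dw_mkPS, ← coeff_pdeOperator_of_degree_lt
      (le_order_mkPS hc) (le_order_mkPS hd) hm, pdeOperator, hpde, map_zero]
  have hb : (b + 1 : ℂ) ≠ 0 := by exact_mod_cast b.succ_ne_zero
  simp only [Nat.add_sub_cancel, Nat.cast_add, Nat.cast_one]
  field_simp
  linear_combination linear
end

section
/- Suppose the coefficients satisfy the relations d_{k−β,β} = −((k−β+1)/β)·c_{k−β+1,β−1} for 1 ≤ β ≤ k. Let r(u) = Q_{k+2}(1,u) − u·P_{k+2}(1,u) with P_{k+2}(z,w) = Σ_{α+β=k} c_{α,β} z^{α+1} w^{β+1}, Q_{k+2}(z,w) = Σ_{α+β=k} d_{α,β} z^{α+1} w^{β+1}. Then for every θ ∈ ℂ with θ ≠ 0, r(θ) = 0 and P_{k+2}(1,θ) ≠ 0, one has r'(θ)/P_{k+2}(1,θ) = −(k+1). -/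
/-!
Under the coefficient relations, `r` satisfies the Euler-type identity
`u r'(u) = r(u) - (k+1) u P_{k+2}(1,u)` for every `u`: in `u r'(u) - r(u) + (k+1) u P_{k+2}(1,u)`
the coefficient of `u^{β+1}` is `β d_{k-β,β} + (k-β+1) c_{k-β+1,β-1}`, which the relation
kills. At a root `θ ≠ 0` of `r` this gives `r'(θ) = -(k+1) P_{k+2}(1,θ)`.
-/

open Finset

theorem mul_deriv_sum_mul_pow {ι 𝕜 : Type*} [NontriviallyNormedField 𝕜] (s : Finset ι)
    (a : ι → 𝕜) (n : ι → ℕ) (x : 𝕜) :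
    x * deriv (fun u ↦ ∑ i ∈ s, a i * u ^ n i) x = ∑ i ∈ s, (n i : 𝕜) * a i * x ^ n i := by
  have hderiv : HasDerivAt (fun u ↦ ∑ i ∈ s, a i * u ^ n i)
      (∑ i ∈ s, a i * (n i * x ^ (n i - 1))) x :=
    HasDerivAt.fun_sum fun i _ ↦ (hasDerivAt_pow (n i) x).const_mul (a i)
  rw [hderiv.deriv, mul_sum]
  refine sum_congr rfl fun i _ ↦ ?_
  cases n i with
  | zero => simp
  | succ j => push_cast; ring

section

variable (k : ℕ)

/-- `diagSum k a m u = ∑_{α+β=k} a_{α,β} u^{β+m}`, so that `P_{k+2}(1,u) = diagSum k c 1 u`. -/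
noncomputable def diagSum (a : ℕ → ℕ → ℂ) (m : ℕ) (u : ℂ) : ℂ :=
  ∑ α ∈ range (k + 1), a α (k - α) * u ^ (k - α + m)

theorem mul_diagSum (a : ℕ → ℕ → ℂ) (m : ℕ) (u : ℂ) :
    u * diagSum k a m u = diagSum k a (m + 1) u := by
  simp only [diagSum, mul_sum, ← add_assoc, pow_succ]
  exact sum_congr rfl fun _ _ ↦ by ring

theorem differentiable_diagSum (a : ℕ → ℕ → ℂ) (m : ℕ) : Differentiable ℂ (diagSum k a m) := by
  unfold diagSum
  fun_prop

theorem mul_deriv_diagSum (a : ℕ → ℕ → ℂ) (m : ℕ) (x : ℂ) :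
    x * deriv (diagSum k a m) x =
      ∑ α ∈ range (k + 1), ((k : ℂ) - α + m) * a α (k - α) * x ^ (k - α + m) := by
  unfold diagSum
  rw [mul_deriv_sum_mul_pow]
  refine sum_congr rfl fun α hα ↦ ?_
  rw [Nat.cast_add, Nat.cast_sub (mem_range_succ_iff.mp hα)]

theorem dehomogenize_eq_diagSum {a : ℕ → ℕ → ℂ} {F : ℂ → ℂ → ℂ}
    (hF : ∀ z w : ℂ, F z w = ∑ α ∈ range (k + 1), a α (k - α) * z ^ (α + 1) * w ^ (k - α + 1))
    (u : ℂ) : F 1 u = diagSum k a 1 u := by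
  simp [hF, diagSum]

def CoeffRelation (c d : ℕ → ℕ → ℂ) : Prop :=
  ∀ β : ℕ, 1 ≤ β → β ≤ k →
    d (k - β) β = -(((k : ℂ) - β + 1) / (β : ℂ)) * c (k - β + 1) (β - 1)

variable {k} {c d : ℕ → ℕ → ℂ}

theorem CoeffRelation.sub_mul_eq (hrel : CoeffRelation k c d) {α : ℕ} (hα : α < k) :
    ((k : ℂ) - α) * d α (k - α) = -((α : ℂ) + 1) * c (α + 1) (k - (α + 1)) := by
  have h := hrel (k - α) (by omega) (by omega)
  have hkα : (k : ℂ) - α ≠ 0 := sub_ne_zero.mpr (by exact_mod_cast hα.ne')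
  rw [Nat.sub_sub_self hα.le, Nat.sub_sub, Nat.cast_sub hα.le] at h
  rw [h]
  field_simp
  ring

theorem CoeffRelation.weighted_sums_cancel (hrel : CoeffRelation k c d) (u : ℂ) :
    ∑ α ∈ range (k + 1), ((k : ℂ) - α) * d α (k - α) * u ^ (k - α + 1) +
      ∑ α ∈ range (k + 1), (α : ℂ) * c α (k - α) * u ^ (k - α + 2) = 0 := by
  rw [sum_range_succ, sum_range_succ', ← add_add_add_comm, ← sum_add_distrib]
  simp only [sub_self, zero_mul, CharP.cast_eq_zero, add_zero]
  refine sum_eq_zero fun α hα ↦ ?_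
  have hαk : α < k := mem_range.mp hα
  rw [show k - (α + 1) + 2 = k - α + 1 by omega, hrel.sub_mul_eq hαk]
  push_cast
  ring

theorem CoeffRelation.mul_deriv_residual (hrel : CoeffRelation k c d) (x : ℂ) :
    x * deriv (fun u ↦ diagSum k d 1 u - diagSum k c 2 u) x =
      (diagSum k d 1 x - diagSum k c 2 x) - ((k : ℂ) + 1) * diagSum k c 2 x := by
  rw [deriv_fun_sub (differentiable_diagSum k d 1 x) (differentiable_diagSum k c 2 x), mul_sub,
    mul_deriv_diagSum, mul_deriv_diagSum]
  have hd : ∑ α ∈ range (k + 1), ((k : ℂ) - α + (1 : ℕ)) * d α (k - α) * x ^ (k - α + 1) =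
      ∑ α ∈ range (k + 1), ((k : ℂ) - α) * d α (k - α) * x ^ (k - α + 1) + diagSum k d 1 x := by
    rw [diagSum, ← sum_add_distrib]
    exact sum_congr rfl fun _ _ ↦ by push_cast; ring
  have hc : ∑ α ∈ range (k + 1), ((k : ℂ) - α + (2 : ℕ)) * c α (k - α) * x ^ (k - α + 2) =
      ((k : ℂ) + 2) * diagSum k c 2 x -
        ∑ α ∈ range (k + 1), (α : ℂ) * c α (k - α) * x ^ (k - α + 2) := by
    rw [diagSum, mul_sum, ← sum_sub_distrib]
    exact sum_congr rfl fun _ _ ↦ by push_cast; ring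
  linear_combination hd - hc + hrel.weighted_sums_cancel x

end

/-- If the coefficients satisfy `d_{k−β,β} = −((k−β+1)/β) c_{k−β+1,β−1}` for
`1 ≤ β ≤ k`, and `r(u) = Q_{k+2}(1,u) − u P_{k+2}(1,u)`, then every `θ ≠ 0` with `r(θ) = 0`
and `P_{k+2}(1,θ) ≠ 0` satisfies `r'(θ)/P_{k+2}(1,θ) = −(k+1)`. -/
theorem hakim_invariant_eq_neg
    (k : ℕ) (c d : ℕ → ℕ → ℂ)
    (hrel : ∀ β : ℕ, 1 ≤ β → β ≤ k →
      d (k - β) β = -(((k : ℂ) - β + 1) / (β : ℂ)) * c (k - β + 1) (β - 1))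
    (P Q : ℂ → ℂ → ℂ) (r : ℂ → ℂ)
    (hP : ∀ z w : ℂ, P z w = ∑ α ∈ Finset.range (k + 1),
      c α (k - α) * z ^ (α + 1) * w ^ (k - α + 1))
    (hQ : ∀ z w : ℂ, Q z w = ∑ α ∈ Finset.range (k + 1),
      d α (k - α) * z ^ (α + 1) * w ^ (k - α + 1))
    (hr : ∀ u : ℂ, r u = Q 1 u - u * P 1 u)
    (θ : ℂ) (hθ : θ ≠ 0) (hrθ : r θ = 0) (hPθ : P 1 θ ≠ 0) :
    deriv r θ / P 1 θ = -((k : ℂ) + 1) := by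
  have hr_eq : r = fun u ↦ diagSum k d 1 u - diagSum k c 2 u := funext fun u ↦ by
    rw [hr, dehomogenize_eq_diagSum k hQ, dehomogenize_eq_diagSum k hP, mul_diagSum]
  have hEuler := CoeffRelation.mul_deriv_residual hrel θ
  rw [← hr_eq] at hEuler
  have hrθ' : diagSum k d 1 θ - diagSum k c 2 θ = 0 := by rwa [hr_eq] at hrθ
  have hPθ' : diagSum k c 2 θ = θ * P 1 θ := by rw [dehomogenize_eq_diagSum k hP, mul_diagSum]
  rw [div_eq_iff hPθ]
  exact mul_left_cancel₀ hθ (by linear_combination hEuler + hrθ' - ((k : ℂ) + 1) * hPθ')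
end

section
/- Let F(z,w) = (z·e^{w·g(z,w)}, w·e^{z·h(z,w)}) with g, h entire on ℂ², and suppose its Jacobian determinant is e^{w·g(z,w)+z·h(z,w)}. Then at every fixed point (z₀,w₀) of F the Jacobian determinant equals 1; consequently F has no attracting fixed point. -/
/-!
At a fixed point off the axes, `z e^{wg} = z` and `w e^{zh} = w` force `e^{wg} = e^{zh} = 1`, so
the Jacobian determinant `e^{wg + zh}` equals `1`; as the determinant is the product of the
eigenvalues, one of them has modulus at least `1`. On the axis `z = 0` the map is
`(0, w) ↦ (0, w)`, so its derivative fixes `(0, 1)` and has eigenvalue `1`; likewise on `w = 0`.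
-/

open Complex

/-- Partial derivative in the first variable. -/
noncomputable def pz (f : ℂ × ℂ → ℂ) (p : ℂ × ℂ) : ℂ :=
  deriv (fun z => f (z, p.2)) p.1

/-- Partial derivative in the second variable. -/
noncomputable def pw (f : ℂ × ℂ → ℂ) (p : ℂ × ℂ) : ℂ :=
  deriv (fun w => f (p.1, w)) p.2

theorem Multiset.exists_one_le_norm_of_one_le_norm_prod {K : Type*} [NormedField K]
    {s : Multiset K} (hs : s ≠ 0) (h : 1 ≤ ‖s.prod‖) : ∃ x ∈ s, 1 ≤ ‖x‖ := by
  induction s using Multiset.induction_on with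
  | empty => exact absurd rfl hs
  | cons a t ih =>
    by_cases ha : 1 ≤ ‖a‖
    · exact ⟨a, mem_cons_self a t, ha⟩
    rw [prod_cons, norm_mul] at h
    rcases eq_or_ne t 0 with rfl | ht
    · simp_all
    have ht1 : 1 ≤ ‖t.prod‖ := by nlinarith [norm_nonneg a, norm_nonneg t.prod]
    obtain ⟨x, hx, hx1⟩ := ih ht ht1
    exact ⟨x, mem_cons_of_mem hx, hx1⟩

theorem Module.End.exists_hasEigenvalue_one_le_norm {K V : Type*} [NormedField K] [IsAlgClosed K]
    [AddCommGroup V] [Module K V] [FiniteDimensional K V] [Nontrivial V] (f : End K V)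
    (hdet : 1 ≤ ‖LinearMap.det f‖) : ∃ μ, f.HasEigenvalue μ ∧ 1 ≤ ‖μ‖ := by
  rw [det_eq_prod_roots_charpoly_of_splits (IsAlgClosed.splits _)] at hdet
  have hroots : f.charpoly.roots ≠ 0 := by
    rw [← Multiset.card_pos, IsAlgClosed.card_roots_eq_natDegree, LinearMap.charpoly_natDegree]
    exact Module.finrank_pos
  obtain ⟨μ, hμ, hμ1⟩ := Multiset.exists_one_le_norm_of_one_le_norm_prod hroots hdet
  rw [Polynomial.mem_roots f.charpoly_monic.ne_zero, ← hasEigenvalue_iff_isRoot_charpoly] at hμ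
  exact ⟨μ, hμ, hμ1⟩

theorem LinearMap.det_prod_eq {R : Type*} [CommRing R] (f : (R × R) →ₗ[R] (R × R)) :
    LinearMap.det f = (f (1, 0)).1 * (f (0, 1)).2 - (f (0, 1)).1 * (f (1, 0)).2 := by
  rw [← LinearMap.det_toMatrix (Module.Basis.finTwoProd R), Matrix.det_fin_two]
  simp [LinearMap.toMatrix_apply]

theorem hasEigenvalue_one_fderiv_of_fixes_line {𝕜 E : Type*} [NontriviallyNormedField 𝕜]
    [NormedAddCommGroup E] [NormedSpace 𝕜 E] {F : E → E} {p v : E}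
    (hF : DifferentiableAt 𝕜 F p) (hv : v ≠ 0) (hline : ∀ t : 𝕜, F (p + t • v) = p + t • v) :
    Module.End.HasEigenvalue (fderiv 𝕜 F p : E →ₗ[𝕜] E) 1 := by
  have hcurve : HasDerivAt (fun t : 𝕜 => p + t • v) v 0 := by
    simpa using ((hasDerivAt_id (0 : 𝕜)).smul_const v).const_add p
  have hcomp : HasDerivAt (fun t : 𝕜 => F (p + t • v)) (fderiv 𝕜 F p v) 0 :=
    hF.hasFDerivAt.comp_hasDerivAt_of_eq 0 hcurve (by simp)
  have hfix : fderiv 𝕜 F p v = v := by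
    rw [funext hline] at hcomp
    exact hcomp.unique hcurve
  exact Module.End.hasEigenvalue_of_hasEigenvector
    ⟨Module.End.mem_eigenspace_iff.mpr (by simpa using hfix), hv⟩

theorem fderiv_apply_one_zero {F : ℂ × ℂ → ℂ × ℂ} {p : ℂ × ℂ} (hF : DifferentiableAt ℂ F p) :
    fderiv ℂ F p (1, 0) = (pz (fun q => (F q).1) p, pz (fun q => (F q).2) p) := by
  have hcurve : HasDerivAt (fun z : ℂ => (z, p.2)) ((1 : ℂ), (0 : ℂ)) p.1 :=
    (hasDerivAt_id p.1).prodMk (hasDerivAt_const p.1 p.2)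
  have hcomp : HasDerivAt (fun z : ℂ => F (z, p.2)) (fderiv ℂ F p (1, 0)) p.1 :=
    hF.hasFDerivAt.comp_hasDerivAt_of_eq p.1 hcurve rfl
  exact Prod.ext ((ContinuousLinearMap.fst ℂ ℂ ℂ).hasFDerivAt.comp_hasDerivAt p.1 hcomp).deriv.symm
    ((ContinuousLinearMap.snd ℂ ℂ ℂ).hasFDerivAt.comp_hasDerivAt p.1 hcomp).deriv.symm

theorem fderiv_apply_zero_one {F : ℂ × ℂ → ℂ × ℂ} {p : ℂ × ℂ} (hF : DifferentiableAt ℂ F p) :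
    fderiv ℂ F p (0, 1) = (pw (fun q => (F q).1) p, pw (fun q => (F q).2) p) := by
  have hcurve : HasDerivAt (fun w : ℂ => (p.1, w)) ((0 : ℂ), (1 : ℂ)) p.2 :=
    (hasDerivAt_const p.2 p.1).prodMk (hasDerivAt_id p.2)
  have hcomp : HasDerivAt (fun w : ℂ => F (p.1, w)) (fderiv ℂ F p (0, 1)) p.2 :=
    hF.hasFDerivAt.comp_hasDerivAt_of_eq p.2 hcurve rfl
  exact Prod.ext ((ContinuousLinearMap.fst ℂ ℂ ℂ).hasFDerivAt.comp_hasDerivAt p.2 hcomp).deriv.symm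
    ((ContinuousLinearMap.snd ℂ ℂ ℂ).hasFDerivAt.comp_hasDerivAt p.2 hcomp).deriv.symm

theorem det_fderiv_eq_pz_mul_pw_sub_pw_mul_pz {F : ℂ × ℂ → ℂ × ℂ} {p : ℂ × ℂ}
    (hF : DifferentiableAt ℂ F p) :
    LinearMap.det (fderiv ℂ F p : (ℂ × ℂ) →ₗ[ℂ] ℂ × ℂ) =
      pz (fun q => (F q).1) p * pw (fun q => (F q).2) p
        - pw (fun q => (F q).1) p * pz (fun q => (F q).2) p := by
  rw [LinearMap.det_prod_eq, ContinuousLinearMap.coe_coe, fderiv_apply_one_zero hF,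
    fderiv_apply_zero_one hF]

/-- If `F(z,w) = (z e^{w g}, w e^{z h})` with `g, h` entire has Jacobian
determinant `e^{w g + z h}`, then the Jacobian determinant equals 1 at every fixed point
off the axes, and `F` has no attracting fixed point at all. -/
theorem no_attracting_fixed_point_of_exp_jacobian
    (g h : ℂ × ℂ → ℂ) (hg : Differentiable ℂ g) (hh : Differentiable ℂ h)
    (F : ℂ × ℂ → ℂ × ℂ)
    (hF : ∀ p : ℂ × ℂ, F p = (p.1 * exp (p.2 * g p), p.2 * exp (p.1 * h p)))
    (hjac : ∀ p : ℂ × ℂ,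
      pz (fun q => (F q).1) p * pw (fun q => (F q).2) p
        - pw (fun q => (F q).1) p * pz (fun q => (F q).2) p
      = exp (p.2 * g p + p.1 * h p)) :
    (∀ p : ℂ × ℂ, F p = p → p.1 ≠ 0 → p.2 ≠ 0 →
      pz (fun q => (F q).1) p * pw (fun q => (F q).2) p
        - pw (fun q => (F q).1) p * pz (fun q => (F q).2) p = 1) ∧
    ¬ ∃ p : ℂ × ℂ, F p = p ∧
      ∀ μ : ℂ, Module.End.HasEigenvalue ((fderiv ℂ F p).toLinearMap) μ → ‖μ‖ < 1 := by
  have hFd : Differentiable ℂ F := by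
    rw [funext hF]
    exact (differentiable_fst.mul (differentiable_snd.mul hg).cexp).prodMk
      (differentiable_snd.mul (differentiable_fst.mul hh).cexp)
  have hdet_one : ∀ p : ℂ × ℂ, F p = p → p.1 ≠ 0 → p.2 ≠ 0 →
      pz (fun q => (F q).1) p * pw (fun q => (F q).2) p
        - pw (fun q => (F q).1) p * pz (fun q => (F q).2) p = 1 := by
    intro p hp h1 h2
    obtain ⟨e1, e2⟩ := Prod.ext_iff.mp ((hF p).symm.trans hp)
    rw [hjac p, exp_add, (mul_eq_left₀ h1).mp e1, (mul_eq_left₀ h2).mp e2, mul_one]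
  refine ⟨hdet_one, fun ⟨p, hp, hsmall⟩ => ?_⟩
  suffices ∃ μ, Module.End.HasEigenvalue ((fderiv ℂ F p).toLinearMap) μ ∧ 1 ≤ ‖μ‖ by
    obtain ⟨μ, hμ, hμ1⟩ := this
    exact (hsmall μ hμ).not_ge hμ1
  by_cases h1 : p.1 = 0
  · refine ⟨1, hasEigenvalue_one_fderiv_of_fixes_line (v := (0, 1)) (hFd p) (by simp)
      fun t => ?_, norm_one.ge⟩
    simp [hF, h1, Prod.ext_iff]
  by_cases h2 : p.2 = 0
  · refine ⟨1, hasEigenvalue_one_fderiv_of_fixes_line (v := (1, 0)) (hFd p) (by simp)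
      fun t => ?_, norm_one.ge⟩
    simp [hF, h2, Prod.ext_iff]
  refine Module.End.exists_hasEigenvalue_one_le_norm _ ?_
  rw [det_fderiv_eq_pz_mul_pw_sub_pw_mul_pz (hFd p), hdet_one p hp h1 h2, norm_one]
end

section
/- Let g(z,w) = Σ_{α+β≥k} c_{α,β} z^α w^β and h(z,w) = Σ_{α+β≥k} d_{α,β} z^α w^β be formal power series of order ≥ k satisfying d_{k−β,β} = −((k−β+1)/β)·c_{k−β+1,β−1} for 1 ≤ β ≤ k, with not all degree-k coefficients of g zero. Define P(z,w) = Σ_{α+β=k} c_{α,β} z^{α+1}w^{β+1} and Q(z,w) = Σ_{α+β=k} d_{α,β} z^{α+1}w^{β+1}. Then every non-degenerate characteristic direction v = (1,θ), θ ≠ 0, of (P,Q) has Hakim invariant A(v) = r'(θ)/P(1,θ) = −(k+1); in particular Re A(v) = −(k+1) < 0. -/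
/-!
Writing `a β = c_{k-β,β}` and `b β = d_{k-β,β}`, the relations say
`b (β+1) = -((k-β)/(β+1)) a β`, and they turn `r(u) = Q(1,u) - u P(1,u)` into
`u · (b 0 - (k+1) T(u))`, where `T(u) = Σ a β u^(β+1)/(β+1)` satisfies `u T'(u) = P(1,u)`.
At a root `θ ≠ 0` of `r` the bracket vanishes, so `r'(θ) = -(k+1) θ T'(θ) = -(k+1) P(1,θ)`.
-/

open Finset

theorem sum_range_succ_reflect_mul_pow {R : Type*} [CommSemiring R] (k : ℕ)
    (c : ℕ → ℕ → R) (u : R) :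
    ∑ α ∈ range (k + 1), c α (k - α) * 1 ^ (α + 1) * u ^ (k - α + 1) =
      ∑ β ∈ range (k + 1), c (k - β) β * u ^ (β + 1) := by
  rw [← sum_range_reflect]
  refine sum_congr rfl fun β hβ => ?_
  have hβk : k - (k + 1 - 1 - β) = β := by simp only [mem_range] at hβ; omega
  rw [hβk, one_pow, mul_one, Nat.add_sub_cancel]

theorem sum_mul_pow_sub_mul_sum_mul_pow {𝕜 : Type*} [Field 𝕜] [CharZero 𝕜] (k : ℕ)
    (a b : ℕ → 𝕜) (hab : ∀ β < k, b (β + 1) = -(((k : 𝕜) - β) / (β + 1)) * a β) (u : 𝕜) :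
    ∑ β ∈ range (k + 1), b β * u ^ (β + 1) - u * ∑ β ∈ range (k + 1), a β * u ^ (β + 1) =
      u * (b 0 - (k + 1) * ∑ β ∈ range (k + 1), a β / (β + 1) * u ^ (β + 1)) := by
  have hshift : ∑ β ∈ range k, b (β + 1) * u ^ (β + 1 + 1) =
      ∑ β ∈ range (k + 1), -(((k : 𝕜) - β) / (β + 1)) * a β * u ^ (β + 2) := by
    rw [sum_range_succ, sub_self, zero_div, neg_zero, zero_mul, zero_mul, add_zero]
    exact sum_congr rfl fun β hβ => by rw [hab β (mem_range.1 hβ)]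
  rw [sum_range_succ', hshift, mul_sub, mul_sum, mul_sum, mul_sum]
  have hterm : ∀ β ∈ range (k + 1),
      -(((k : 𝕜) - β) / (β + 1)) * a β * u ^ (β + 2) - u * (a β * u ^ (β + 1)) =
        -(u * ((k + 1) * (a β / (β + 1) * u ^ (β + 1)))) := by
    intro β _
    have hβ : (β : 𝕜) + 1 ≠ 0 := by exact_mod_cast Nat.succ_ne_zero β
    field_simp
    ring
  have hsum := sum_congr rfl hterm
  rw [sum_sub_distrib, sum_neg_distrib] at hsum
  linear_combination hsum

theorem hasDerivAt_sum_div_succ_mul_pow {𝕜 : Type*} [NontriviallyNormedField 𝕜] [CharZero 𝕜]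
    (s : Finset ℕ) (a : ℕ → 𝕜) (θ : 𝕜) :
    HasDerivAt (fun u => ∑ β ∈ s, a β / (β + 1) * u ^ (β + 1)) (∑ β ∈ s, a β * θ ^ β) θ := by
  refine HasDerivAt.fun_sum fun β _ => ?_
  have hβ : (β : 𝕜) + 1 ≠ 0 := by exact_mod_cast Nat.succ_ne_zero β
  refine ((hasDerivAt_pow (β + 1) θ).const_mul (a β / (β + 1))).congr_deriv ?_
  rw [Nat.add_sub_cancel, Nat.cast_succ]
  field_simp

theorem HasDerivAt.id_mul_of_apply_eq_zero {𝕜 : Type*} [NontriviallyNormedField 𝕜]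
    {f : 𝕜 → 𝕜} {f' θ : 𝕜} (hf : HasDerivAt f f' θ) (h0 : f θ = 0) :
    HasDerivAt (fun u => u * f u) (θ * f') θ := by
  simpa [h0] using (hasDerivAt_id' θ).fun_mul hf

theorem hasDerivAt_sum_mul_pow_sub_mul_sum_mul_pow {𝕜 : Type*} [NontriviallyNormedField 𝕜]
    [CharZero 𝕜] (k : ℕ) (a b : ℕ → 𝕜)
    (hab : ∀ β < k, b (β + 1) = -(((k : 𝕜) - β) / (β + 1)) * a β) {θ : 𝕜} (hθ : θ ≠ 0)
    (hroot : ∑ β ∈ range (k + 1), b β * θ ^ (β + 1) -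
      θ * ∑ β ∈ range (k + 1), a β * θ ^ (β + 1) = 0) :
    HasDerivAt (fun u => ∑ β ∈ range (k + 1), b β * u ^ (β + 1) -
        u * ∑ β ∈ range (k + 1), a β * u ^ (β + 1))
      (-(k + 1) * ∑ β ∈ range (k + 1), a β * θ ^ (β + 1)) θ := by
  set F : 𝕜 → 𝕜 := fun u => b 0 - (k + 1) * ∑ β ∈ range (k + 1), a β / (β + 1) * u ^ (β + 1)
  have hF : HasDerivAt F (-(k + 1) * ∑ β ∈ range (k + 1), a β * θ ^ β) θ :=
    (((hasDerivAt_sum_div_succ_mul_pow _ a θ).const_mul ((k : 𝕜) + 1)).const_sub (b 0)).congr_deriv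
      (neg_mul _ _).symm
  have hfactor : (fun u => ∑ β ∈ range (k + 1), b β * u ^ (β + 1) -
      u * ∑ β ∈ range (k + 1), a β * u ^ (β + 1)) = fun u => u * F u :=
    funext (sum_mul_pow_sub_mul_sum_mul_pow k a b hab)
  rw [sum_mul_pow_sub_mul_sum_mul_pow k a b hab] at hroot
  rw [hfactor]
  refine (hF.id_mul_of_apply_eq_zero ((mul_eq_zero.1 hroot).resolve_left hθ)).congr_deriv ?_
  rw [mul_left_comm, mul_sum]
  exact congrArg _ (sum_congr rfl fun β _ => by ring)

theorem hakim_invariants_all_negative_general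
    (k : ℕ) (c d : ℕ → ℕ → ℂ)
    (hrel : ∀ β : ℕ, 1 ≤ β → β ≤ k →
      d (k - β) β = -(((k : ℂ) - β + 1) / (β : ℂ)) * c (k - β + 1) (β - 1))
    (P Q : ℂ → ℂ → ℂ) (r : ℂ → ℂ)
    (hP : ∀ z w : ℂ, P z w = ∑ α ∈ Finset.range (k + 1),
      c α (k - α) * z ^ (α + 1) * w ^ (k - α + 1))
    (hQ : ∀ z w : ℂ, Q z w = ∑ α ∈ Finset.range (k + 1),
      d α (k - α) * z ^ (α + 1) * w ^ (k - α + 1))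
    (hr : ∀ u : ℂ, r u = Q 1 u - u * P 1 u) :
    ∀ θ : ℂ, θ ≠ 0 → r θ = 0 → P 1 θ ≠ 0 →
      deriv r θ / P 1 θ = -((k : ℂ) + 1) ∧ (deriv r θ / P 1 θ).re < 0 := by
  intro θ hθ hrθ hPθ
  have hP1 (u : ℂ) : P 1 u = ∑ β ∈ range (k + 1), c (k - β) β * u ^ (β + 1) := by
    rw [hP, sum_range_succ_reflect_mul_pow]
  have hQ1 (u : ℂ) : Q 1 u = ∑ β ∈ range (k + 1), d (k - β) β * u ^ (β + 1) := by
    rw [hQ, sum_range_succ_reflect_mul_pow]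
  have hr' : r = fun u => Q 1 u - u * P 1 u := funext hr
  have hrel' : ∀ β < k, d (k - (β + 1)) (β + 1) = -(((k : ℂ) - β) / (β + 1)) * c (k - β) β := by
    intro β hβ
    rw [hrel (β + 1) (Nat.le_add_left 1 β) hβ, Nat.add_sub_cancel,
      show k - (β + 1) + 1 = k - β by omega]
    push_cast
    ring
  have hderiv : HasDerivAt r (-(k + 1) * P 1 θ) θ := by
    simp only [hr', hP1, hQ1] at hrθ ⊢
    exact hasDerivAt_sum_mul_pow_sub_mul_sum_mul_pow k _ _ hrel' hθ hrθ
  have hA : deriv r θ / P 1 θ = -((k : ℂ) + 1) := by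
    rw [hderiv.deriv, mul_div_cancel_right₀ _ hPθ]
  refine ⟨hA, ?_⟩
  rw [hA]
  simp only [Complex.neg_re, Complex.add_re, Complex.natCast_re, Complex.one_re, Left.neg_neg_iff]
  positivity

/-- If the degree-`k` coefficients of `g, h` (of order ≥ k, with `g`'s degree-`k`
part nonzero) satisfy the relations `d_{k−β,β} = −((k−β+1)/β) c_{k−β+1,β−1}` forced by
preservation of `dz∧dw/(zw)`, then every non-degenerate characteristic direction `(1,θ)`,
`θ ≠ 0`, of `(P,Q)` (with `P = Σ_{α+β=k} c_{α,β} z^{α+1} w^{β+1}`,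
`Q = Σ_{α+β=k} d_{α,β} z^{α+1} w^{β+1}`) has Hakim invariant
`A(v) = r'(θ)/P(1,θ) = −(k+1)`; in particular `Re A(v) < 0`. -/
theorem hakim_invariants_all_negative
    (k : ℕ) (c d : ℕ → ℕ → ℂ)
    (hc : ∀ α β : ℕ, α + β < k → c α β = 0)
    (hd : ∀ α β : ℕ, α + β < k → d α β = 0)
    (hrel : ∀ β : ℕ, 1 ≤ β → β ≤ k →
      d (k - β) β = -(((k : ℂ) - β + 1) / (β : ℂ)) * c (k - β + 1) (β - 1))
    (hnz : ∃ α : ℕ, α ≤ k ∧ c α (k - α) ≠ 0)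
    (P Q : ℂ → ℂ → ℂ) (r : ℂ → ℂ)
    (hP : ∀ z w : ℂ, P z w = ∑ α ∈ Finset.range (k + 1),
      c α (k - α) * z ^ (α + 1) * w ^ (k - α + 1))
    (hQ : ∀ z w : ℂ, Q z w = ∑ α ∈ Finset.range (k + 1),
      d α (k - α) * z ^ (α + 1) * w ^ (k - α + 1))
    (hr : ∀ u : ℂ, r u = Q 1 u - u * P 1 u) :
    ∀ θ : ℂ, θ ≠ 0 → r θ = 0 → P 1 θ ≠ 0 →
      deriv r θ / P 1 θ = -((k : ℂ) + 1) ∧ (deriv r θ / P 1 θ).re < 0 :=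
  hakim_invariants_all_negative_general k c d hrel P Q r hP hQ hr
end
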